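/- Let θ ∈ (0, π/2). For x ≥ 0 let V(x) := lim_{z→∞} z² · ( F(x,z) − D(x,z)² ), where D and F are defined as in the directional growth model (conditional mean and second moment of the one-step slope increment). Then lim_{x→0⁺} V(x) = ( θ² + θ·sin θ·cos θ ) / (2θ²). Equivalently, the iterated limit lim_{x→0⁺} lim_{z→∞} z² · ( F(x,z) − D(x,z)² ) exists and equals ( θ² + θ·sin θ·cos θ ) / (2θ²). -/

import Mathlib

/-!
Since `(x z ± cos α) / (z + sin α) - x = (± cos α - x sin α) / (z + sin α)`, the rescaled
increment `z · (…)` converges boundedly to `± cos α - x sin α` as `z → ∞`, so by dominated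
convergence `z² (F - D²)` converges to the variance of this limit. That variance is an
elementary trigonometric integral; using `sin (arctan x) = x cos (arctan x)` it evaluates to
the closed form `V(x)`, a polynomial in `x`, whose value at `0` is the claimed limit.
-/

open Real Filter Set intervalIntegral

/-- The conditional expected one-step increment of the slope process in the
directional growth model. -/
noncomputable def growthDrift (θ x z : ℝ) : ℝ :=
  (1 / (2 * θ)) *
    ((∫ α in (-(Real.arctan x))..θ, ((x * z + Real.cos α) / (z + Real.sin α) - x)) +
     (∫ α in (Real.arctan x)..θ, ((x * z - Real.cos α) / (z + Real.sin α) - x)))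

/-- The conditional second moment of the one-step increment of the slope process in
the directional growth model. -/
noncomputable def growthSecondMoment (θ x z : ℝ) : ℝ :=
  (1 / (2 * θ)) *
    ((∫ α in (-(Real.arctan x))..θ, ((x * z + Real.cos α) / (z + Real.sin α) - x) ^ 2) +
     (∫ α in (Real.arctan x)..θ, ((x * z - Real.cos α) / (z + Real.sin α) - x) ^ 2))

open Topology

theorem tendsto_div_add_const_atTop (s : ℝ) :
    Tendsto (fun z : ℝ => z / (z + s)) atTop (𝓝 1) := by
  have h : Tendsto (fun z : ℝ => 1 - s * (z + s)⁻¹) atTop (𝓝 (1 - s * 0)) :=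
    tendsto_const_nhds.sub
      ((tendsto_atTop_add_const_right _ s tendsto_id).inv_tendsto_atTop.const_mul s)
  rw [mul_zero, sub_zero] at h
  refine h.congr' ?_
  filter_upwards [eventually_gt_atTop (-s)] with z hz
  have : z + s ≠ 0 := by linarith
  field_simp
  ring

theorem abs_div_add_sin_le_two {z : ℝ} (hz : 2 ≤ z) (α : ℝ) : |z / (z + sin α)| ≤ 2 := by
  have hden : z / 2 ≤ z + sin α := by linarith [neg_one_le_sin α]
  rw [abs_of_nonneg (div_nonneg (by linarith) (by linarith)), div_le_iff₀ (by linarith)]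
  linarith

theorem tendsto_pow_mul_integral_pow_div_add_sin {g : ℝ → ℝ} (hg : Continuous g) (n : ℕ)
    (a b : ℝ) :
    Tendsto (fun z => z ^ n * ∫ α in a..b, (g α / (z + sin α)) ^ n) atTop
      (𝓝 (∫ α in a..b, g α ^ n)) := by
  have hrw : ∀ z, z ^ n * ∫ α in a..b, (g α / (z + sin α)) ^ n
      = ∫ α in a..b, (z / (z + sin α) * g α) ^ n := fun z => by
    rw [← intervalIntegral.integral_const_mul]
    congr 1 with α
    rw [← mul_pow, mul_div_assoc', div_mul_eq_mul_div]
  simp only [hrw]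
  refine intervalIntegral.tendsto_integral_filter_of_dominated_convergence
    (fun α => (2 * |g α|) ^ n) ?_ ?_ ?_ ?_
  · filter_upwards [eventually_ge_atTop 2] with z hz
    exact (((continuous_const.div (continuous_const.add continuous_sin)
      fun α => (show z + sin α ≠ 0 by linarith [neg_one_le_sin α])).mul hg).pow n
      ).aestronglyMeasurable
  · filter_upwards [eventually_ge_atTop 2] with z hz
    refine .of_forall fun α _ => ?_
    rw [norm_pow, Real.norm_eq_abs, abs_mul]
    gcongr
    exact abs_div_add_sin_le_two hz α
  · exact ((continuous_const.mul hg.abs).pow n).intervalIntegrable a b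
  · refine .of_forall fun α _ => ?_
    simpa using ((tendsto_div_add_const_atTop (sin α)).mul_const (g α)).pow n

theorem integral_cos_sub_mul_sin (c a b : ℝ) :
    ∫ α in a..b, (cos α - c * sin α) = (sin b + c * cos b) - (sin a + c * cos a) := by
  rw [intervalIntegral.integral_sub intervalIntegrable_cos
    (intervalIntegrable_sin.const_mul c), intervalIntegral.integral_const_mul,
    integral_cos, integral_sin]
  ring

theorem integral_cos_sub_mul_sin_sq (c a b : ℝ) :
    ∫ α in a..b, (cos α - c * sin α) ^ 2 =
      ((1 + c ^ 2) / 2 * b + (1 - c ^ 2) / 4 * sin (2 * b) + c / 2 * cos (2 * b)) -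
        ((1 + c ^ 2) / 2 * a + (1 - c ^ 2) / 4 * sin (2 * a) + c / 2 * cos (2 * a)) := by
  refine intervalIntegral.integral_eq_sub_of_hasDerivAt
    (f := fun t => (1 + c ^ 2) / 2 * t + (1 - c ^ 2) / 4 * sin (2 * t) + c / 2 * cos (2 * t))
    (fun t _ => ?_)
    ((by fun_prop : Continuous fun α => (cos α - c * sin α) ^ 2).intervalIntegrable a b)
  have h2 : HasDerivAt (fun t : ℝ => 2 * t) 2 t := by
    simpa using (hasDerivAt_id t).const_mul (2 : ℝ)
  convert (((hasDerivAt_id t).const_mul ((1 + c ^ 2) / 2)).add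
    (((hasDerivAt_sin _).comp t h2).const_mul ((1 - c ^ 2) / 4))).add
    (((hasDerivAt_cos _).comp t h2).const_mul (c / 2)) using 1
  · rfl
  · rw [cos_two_mul, sin_two_mul]
    linear_combination c ^ 2 * sin_sq_add_cos_sq t

theorem integral_neg_arctan_add_integral_arctan (x θ : ℝ) :
    (∫ α in -arctan x..θ, (cos α - x * sin α)) + ∫ α in arctan x..θ, (-cos α - x * sin α) =
      2 * x * cos θ := by
  have hneg : ∫ α in arctan x..θ, (-cos α - x * sin α) =
      -∫ α in arctan x..θ, (cos α - -x * sin α) := by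
    rw [← intervalIntegral.integral_neg]
    congr 1 with α
    ring
  have htan : sin (arctan x) = x * cos (arctan x) := by
    rw [sin_arctan, cos_arctan]
    ring
  rw [hneg, integral_cos_sub_mul_sin, integral_cos_sub_mul_sin, sin_neg, cos_neg, htan]
  ring

theorem integral_neg_arctan_add_integral_arctan_sq (x θ : ℝ) :
    (∫ α in -arctan x..θ, (cos α - x * sin α) ^ 2) +
        ∫ α in arctan x..θ, (-cos α - x * sin α) ^ 2 =
      (1 + x ^ 2) * θ + (1 - x ^ 2) * sin θ * cos θ := by
  have hneg : ∫ α in arctan x..θ, (-cos α - x * sin α) ^ 2 =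
      ∫ α in arctan x..θ, (cos α - -x * sin α) ^ 2 := by
    congr 1 with α
    ring
  rw [hneg, integral_cos_sub_mul_sin_sq, integral_cos_sub_mul_sin_sq, mul_neg (2 : ℝ), sin_neg,
    cos_neg, sin_two_mul θ]
  ring

noncomputable def limitVariance (θ x : ℝ) : ℝ :=
  (1 / (2 * θ ^ 2)) *
    ((x ^ 2 + 1) * θ ^ 2 - 2 * x ^ 2 * cos θ ^ 2 - (x ^ 2 - 1) * θ * sin θ * cos θ)

theorem growthDrift_eq_of_one_lt {θ x z : ℝ} (hz : 1 < z) :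
    growthDrift θ x z = (1 / (2 * θ)) *
      ((∫ α in -arctan x..θ, (cos α - x * sin α) / (z + sin α)) +
        ∫ α in arctan x..θ, (-cos α - x * sin α) / (z + sin α)) := by
  have hpos (α : ℝ) : z + sin α ≠ 0 := by linarith [neg_one_le_sin α]
  unfold growthDrift
  congr 2 <;> refine intervalIntegral.integral_congr fun α _ => ?_ <;>
    field_simp [hpos α] <;> ring

theorem growthSecondMoment_eq_of_one_lt {θ x z : ℝ} (hz : 1 < z) :
    growthSecondMoment θ x z = (1 / (2 * θ)) *
      ((∫ α in -arctan x..θ, ((cos α - x * sin α) / (z + sin α)) ^ 2) +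
        ∫ α in arctan x..θ, ((-cos α - x * sin α) / (z + sin α)) ^ 2) := by
  have hpos (α : ℝ) : z + sin α ≠ 0 := by linarith [neg_one_le_sin α]
  unfold growthSecondMoment
  congr 2 <;> refine intervalIntegral.integral_congr fun α _ => ?_ <;>
    field_simp [hpos α] <;> ring

theorem tendsto_sq_mul_growthVariance (θ x : ℝ) :
    Tendsto (fun z => z ^ 2 * (growthSecondMoment θ x z - growthDrift θ x z ^ 2)) atTop
      (𝓝 (limitVariance θ x)) := by
  have hcont₁ : Continuous fun α => cos α - x * sin α := by fun_prop
  have hcont₂ : Continuous fun α => -cos α - x * sin α := by fun_prop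
  have hdrift := ((tendsto_pow_mul_integral_pow_div_add_sin hcont₁ 1 (-arctan x) θ).add
    (tendsto_pow_mul_integral_pow_div_add_sin hcont₂ 1 (arctan x) θ)).const_mul (1 / (2 * θ))
  have hmoment := ((tendsto_pow_mul_integral_pow_div_add_sin hcont₁ 2 (-arctan x) θ).add
    (tendsto_pow_mul_integral_pow_div_add_sin hcont₂ 2 (arctan x) θ)).const_mul (1 / (2 * θ))
  simp only [pow_one] at hdrift
  rw [integral_neg_arctan_add_integral_arctan] at hdrift
  rw [integral_neg_arctan_add_integral_arctan_sq] at hmoment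
  have hvalue : limitVariance θ x =
      1 / (2 * θ) * ((1 + x ^ 2) * θ + (1 - x ^ 2) * sin θ * cos θ) -
        (1 / (2 * θ) * (2 * x * cos θ)) ^ 2 := by
    rcases eq_or_ne θ 0 with rfl | hθ
    · simp [limitVariance]
    · unfold limitVariance
      field_simp
      ring
  rw [hvalue]
  refine (hmoment.sub (hdrift.pow 2)).congr' ?_
  filter_upwards [eventually_gt_atTop 1] with z hz
  rw [growthSecondMoment_eq_of_one_lt hz, growthDrift_eq_of_one_lt hz]
  ring

theorem stmt_4_general (θ : ℝ) :
    ∃ V : ℝ → ℝ,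
      (∀ x : ℝ, 0 ≤ x →
        Filter.Tendsto
          (fun z : ℝ => z ^ 2 * (growthSecondMoment θ x z - (growthDrift θ x z) ^ 2))
          Filter.atTop (nhds (V x))) ∧
      Filter.Tendsto V (nhdsWithin 0 (Set.Ioi 0))
        (nhds ((θ ^ 2 + θ * Real.sin θ * Real.cos θ) / (2 * θ ^ 2))) := by
  refine ⟨limitVariance θ, fun x _ => tendsto_sq_mul_growthVariance θ x, ?_⟩
  have hcont : Continuous (limitVariance θ) := by
    unfold limitVariance
    fun_prop
  have hzero : limitVariance θ 0 = (θ ^ 2 + θ * sin θ * cos θ) / (2 * θ ^ 2) := by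
    simp only [limitVariance]
    ring
  exact hzero ▸ (hcont.tendsto 0).mono_left nhdsWithin_le_nhds

theorem stmt_4 (θ : ℝ) (hθ : θ ∈ Set.Ioo 0 (Real.pi / 2)) :
    ∃ V : ℝ → ℝ,
      (∀ x : ℝ, 0 ≤ x →
        Filter.Tendsto
          (fun z : ℝ => z ^ 2 * (growthSecondMoment θ x z - (growthDrift θ x z) ^ 2))
          Filter.atTop (nhds (V x))) ∧
      Filter.Tendsto V (nhdsWithin 0 (Set.Ioi 0))
        (nhds ((θ ^ 2 + θ * Real.sin θ * Real.cos θ) / (2 * θ ^ 2))) :=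
  stmt_4_general θ
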